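/- arXiv:0810.3371 — 3 statements merged into one kernel-verified Lean document; each statement's English description precedes it below -/
import Mathlib

section
/- Suppose a spacelike graph with parallel mean curvature H satisfies, for every p and r > 0, the Heinz–Chern inequality m‖H‖ ≤ sup_{B_r(p)} cosh θ · 𝔥(B_r(p)). If the base (Σ₁,g₁) is complete with 𝔥(B_r(p)) ≤ C/r and cosh θ(x) = o(r(x)) as r → ∞, then H = 0. -/
/-!
Given `ε > 0`, `cosh θ ≤ ε r` outside a large ball, so the supremum of `cosh θ` over `B_r(p)` is
at most `ε r` for large `r`. With `𝔥(B_r(p)) ≤ C / r` the Heinz–Chern inequality gives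
`m ‖H‖ ≤ ε r · C / r = C ε`, and letting `ε → 0` forces `‖H‖ = 0`.
-/

open Metric Filter Topology

/-- When `f` is unbounded on `B_R(p)` the bound holds through the junk value `sSup = 0` of an
unbounded set of reals. -/
theorem eventually_sSup_image_ball_le_mul {X : Type*} [PseudoMetricSpace X] (p : X)
    (f : X → ℝ) {ε R : ℝ} (hε : 0 < ε) (hf : ∀ x, R ≤ dist p x → f x ≤ ε * dist p x) :
    ∀ᶠ r in atTop, sSup (f '' ball p r) ≤ ε * r := by
  by_cases hbdd : BddAbove (f '' ball p R)
  · filter_upwards [eventually_ge_atTop R, eventually_ge_atTop 0,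
      eventually_ge_atTop (sSup (f '' ball p R) / ε)] with r hRr hr0 hMr
    refine Real.sSup_le ?_ (by positivity)
    rintro _ ⟨x, hx, rfl⟩
    rw [mem_ball'] at hx
    rcases lt_or_ge (dist p x) R with hxR | hxR
    · calc f x ≤ sSup (f '' ball p R) := le_csSup hbdd ⟨x, mem_ball'.2 hxR, rfl⟩
        _ ≤ ε * r := (div_le_iff₀' hε).1 hMr
    · calc f x ≤ ε * dist p x := hf x hxR
        _ ≤ ε * r := by gcongr
  · filter_upwards [eventually_ge_atTop R, eventually_ge_atTop 0] with r hRr hr0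
    have hunbdd : ¬ BddAbove (f '' ball p r) :=
      fun h ↦ hbdd (h.mono (Set.image_mono (ball_subset_ball hRr)))
    rw [Real.sSup_of_not_bddAbove hunbdd]
    positivity

theorem nonpos_of_forall_pos_le_mul {a C : ℝ} (h : ∀ ε, 0 < ε → a ≤ C * ε) : a ≤ 0 := by
  have hlim : Tendsto (fun ε ↦ C * ε) (𝓝[>] 0) (𝓝 0) := by
    simpa using (continuous_const_mul C).continuousWithinAt.tendsto (x := (0 : ℝ))
  exact ge_of_tendsto hlim (eventually_nhdsWithin_of_forall h)

theorem stmt11_general (S1 : Type*) [MetricSpace S1]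
    (m : ℕ) (hm : 2 ≤ m) (p : S1)
    (coshθ : S1 → ℝ)
    (cheeger : ℝ → ℝ) (hcheeger_nonneg : ∀ r, 0 < r → 0 ≤ cheeger r)
    (normH : ℝ) (hnormH : 0 ≤ normH)
    (hHC : ∀ r : ℝ, 0 < r →
      (m : ℝ) * normH ≤ sSup (coshθ '' ball p r) * cheeger r)
    (C : ℝ) (hch : ∀ r : ℝ, 0 < r → cheeger r ≤ C / r)
    (hlittleo : ∀ ε : ℝ, 0 < ε → ∃ R : ℝ, 0 < R ∧ ∀ x : S1, R ≤ dist p x →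
      coshθ x ≤ ε * dist p x) :
    normH = 0 := by
  have hbound : ∀ ε, 0 < ε → (m : ℝ) * normH ≤ C * ε := by
    intro ε hε
    obtain ⟨R, -, hR⟩ := hlittleo ε hε
    obtain ⟨r, hr0, hsup⟩ := ((eventually_gt_atTop 0).and
      (eventually_sSup_image_ball_le_mul p coshθ hε hR)).exists
    calc (m : ℝ) * normH ≤ sSup (coshθ '' ball p r) * cheeger r := hHC r hr0
      _ ≤ (ε * r) * (C / r) := mul_le_mul hsup (hch r hr0) (hcheeger_nonneg r hr0) (by positivity)
      _ = C * ε := by field_simp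
  have hm0 : (0 : ℝ) < m := by exact_mod_cast (by omega : 0 < m)
  have hmH : (m : ℝ) * normH ≤ 0 := nonpos_of_forall_pos_le_mul hbound
  exact le_antisymm (nonpos_of_mul_nonpos_right hmH hm0) hnormH

/-- Suppose a spacelike graph with parallel mean curvature `H` satisfies
the Heinz–Chern inequality `m‖H‖ ≤ sup_{B_r(p)} cosh θ · 𝔥(B_r(p))` for every `r > 0`.
If the base `(S1,g₁)` is complete with `𝔥(B_r(p)) ≤ C/r` and `cosh θ(x) = o(r(x))` as
`r(x) = dist(p,x) → ∞`, then `H = 0` (i.e. `‖H‖ = 0`, the graph is maximal). -/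
theorem stmt11 (S1 : Type*) [MetricSpace S1] [CompleteSpace S1]
    (m : ℕ) (hm : 2 ≤ m) (p : S1)
    (coshθ : S1 → ℝ) (hcosh1 : ∀ x, 1 ≤ coshθ x)
    (cheeger : ℝ → ℝ) (hcheeger_nonneg : ∀ r, 0 < r → 0 ≤ cheeger r)
    (normH : ℝ) (hnormH : 0 ≤ normH)
    (hHC : ∀ r : ℝ, 0 < r →
      (m : ℝ) * normH ≤ sSup (coshθ '' ball p r) * cheeger r)
    (C : ℝ) (hC : 0 < C) (hch : ∀ r : ℝ, 0 < r → cheeger r ≤ C / r)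
    (hlittleo : ∀ ε : ℝ, 0 < ε → ∃ R : ℝ, 0 < R ∧ ∀ x : S1, R ≤ dist p x →
      coshθ x ≤ ε * dist p x) :
    normH = 0 :=
  stmt11_general S1 m hm p coshθ cheeger hcheeger_nonneg normH hnormH hHC C hch hlittleo
end

section
/- For λ₁, λ₂ ∈ [0,1) and real symmetric data h^α_{ij}, the Gauss curvature of a maximal spacelike graphic surface, K_M = [K₁ − λ₁²λ₂² K₂]/((1−λ₁²)(1−λ₂²)) + ∑_α[(h^α_{11})² + (h^α_{12})²], is nonnegative whenever K₁ ≥ 0 and K₁ ≥ K₂ pointwise (for all relevant planes). -/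
/-- For `λ₁, λ₂ ∈ [0,1)` and real second-fundamental-form components
`h^α_{11}, h^α_{12}`, the Gauss curvature of a maximal spacelike graphic surface,
`K_M = [K₁ − λ₁²λ₂²K₂]/((1−λ₁²)(1−λ₂²)) + ∑_α[(h^α_{11})² + (h^α_{12})²]`,
is nonnegative whenever `K₁ ≥ 0` and `K₁ ≥ K₂`. -/
theorem stmt12 (n : ℕ) (lam₁ lam₂ K₁ K₂ : ℝ)
    (h11 h12 : Fin n → ℝ)
    (hlam₁ : 0 ≤ lam₁ ∧ lam₁ < 1) (hlam₂ : 0 ≤ lam₂ ∧ lam₂ < 1)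
    (hK₁ : 0 ≤ K₁) (hK : K₂ ≤ K₁) :
    0 ≤ (K₁ - lam₁ ^ 2 * lam₂ ^ 2 * K₂) / ((1 - lam₁ ^ 2) * (1 - lam₂ ^ 2)) +
        ∑ α, ((h11 α) ^ 2 + (h12 α) ^ 2) := by
  have h1 : lam₁ ^ 2 < 1 := by nlinarith [hlam₁.1, hlam₁.2]
  have h2 : lam₂ ^ 2 < 1 := by nlinarith [hlam₂.1, hlam₂.2]
  have hd : 0 < (1 - lam₁ ^ 2) * (1 - lam₂ ^ 2) := by nlinarith
  have hnum : 0 ≤ K₁ - lam₁ ^ 2 * lam₂ ^ 2 * K₂ := by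
    have hp : (0:ℝ) ≤ lam₁ ^ 2 * lam₂ ^ 2 := by positivity
    have hle : lam₁ ^ 2 * lam₂ ^ 2 ≤ 1 := by nlinarith
    nlinarith [mul_le_mul_of_nonneg_left hK hp, mul_le_mul_of_nonneg_right hle hK₁]
  have hsum : 0 ≤ ∑ α, ((h11 α) ^ 2 + (h12 α) ^ 2) :=
    Finset.sum_nonneg fun α _ => by positivity
  exact add_nonneg (div_nonneg hnum hd.le) hsum
end

section
/- Let λ_i ∈ (−1,1) for i = 1,…,m and let h^α_{ij} be real numbers symmetric in i,j (components of the second fundamental form). Then ‖B‖² − ∑_{k,i} λ_i²(h^{m+i}_{ik})² − 2∑_{k, i<j} λ_i λ_j h^{m+j}_{ik} h^{m+i}_{jk} ≥ δ‖B‖², where ‖B‖² = ∑_{α,i,j}(h^α_{ij})² and δ = 1 − max_i λ_i² > 0. -/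
open Finset

lemma split_sum {m : ℕ} (f : Fin m → Fin m → ℝ) :
    ∑ a, ∑ i, f a i =
      (∑ i, f i i) + ∑ i, ∑ j ∈ Finset.univ.filter (fun j => i < j), (f i j + f j i) := by
  have h1 : ∀ a i : Fin m, f a i =
      (if a = i then f a i else 0) + (if a < i then f a i else 0) +
        (if i < a then f a i else 0) := by
    intro a i
    rcases lt_trichotomy a i with hlt | heq | hgt
    · rw [if_neg hlt.ne, if_pos hlt, if_neg (asymm hlt)]; ring
    · subst heq; simp
    · rw [if_neg hgt.ne', if_neg (asymm hgt), if_pos hgt]; ring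
  calc ∑ a, ∑ i, f a i
      = ∑ a, ∑ i, ((if a = i then f a i else 0) + (if a < i then f a i else 0) +
          (if i < a then f a i else 0)) := by
        exact Finset.sum_congr rfl fun a _ => Finset.sum_congr rfl fun i _ => h1 a i
    _ = (∑ a, ∑ i, if a = i then f a i else 0) + (∑ a, ∑ i, if a < i then f a i else 0) +
          (∑ a, ∑ i, if i < a then f a i else 0) := by
        simp [Finset.sum_add_distrib]
    _ = (∑ i, f i i) + (∑ a, ∑ i ∈ Finset.univ.filter (fun i => a < i), f a i) +
          (∑ i, ∑ a ∈ Finset.univ.filter (fun a => i < a), f a i) := by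
        congr 1
        · congr 1
          · simp
          · exact Finset.sum_congr rfl fun a _ => (Finset.sum_filter _ _).symm
        · rw [Finset.sum_comm]
          exact Finset.sum_congr rfl fun i _ => (Finset.sum_filter _ _).symm
    _ = (∑ i, f i i) + ∑ i, ∑ j ∈ Finset.univ.filter (fun j => i < j), (f i j + f j i) := by
        rw [add_assoc]
        congr 1
        rw [← Finset.sum_add_distrib]
        exact Finset.sum_congr rfl fun i _ => by rw [← Finset.sum_add_distrib]

lemma key_ineq {m : ℕ} (lam : Fin m → ℝ) (δ : ℝ) (hδ : ∀ i, lam i ^ 2 ≤ 1 - δ)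
    (x : Fin m → Fin m → ℝ) :
    δ * (∑ a, ∑ i, x a i ^ 2) ≤
      (∑ a, ∑ i, x a i ^ 2) - (∑ i, lam i ^ 2 * x i i ^ 2)
        - 2 * ∑ i, ∑ j ∈ Finset.univ.filter (fun j => i < j),
            lam i * lam j * x j i * x i j := by
  have hsplit := split_sum (fun a i => x a i ^ 2)
  have h1 : (∑ i, lam i ^ 2 * x i i ^ 2) ≤ (1 - δ) * ∑ i, x i i ^ 2 := by
    rw [Finset.mul_sum]
    exact Finset.sum_le_sum fun i _ => mul_le_mul_of_nonneg_right (hδ i) (sq_nonneg _)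
  have h2 : 2 * (∑ i, ∑ j ∈ Finset.univ.filter (fun j => i < j),
        lam i * lam j * x j i * x i j) ≤
      (1 - δ) * ∑ i, ∑ j ∈ Finset.univ.filter (fun j => i < j), (x i j ^ 2 + x j i ^ 2) := by
    rw [Finset.mul_sum, Finset.mul_sum]
    refine Finset.sum_le_sum fun i _ => ?_
    rw [Finset.mul_sum, Finset.mul_sum]
    refine Finset.sum_le_sum fun j _ => ?_
    nlinarith [sq_nonneg (lam i * x i j - lam j * x j i),
      mul_nonneg (sub_nonneg.2 (hδ i)) (sq_nonneg (x i j)),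
      mul_nonneg (sub_nonneg.2 (hδ j)) (sq_nonneg (x j i))]
  set P := ∑ i, x i i ^ 2
  set Q := ∑ i, ∑ j ∈ Finset.univ.filter (fun j => i < j), (x i j ^ 2 + x j i ^ 2)
  rw [hsplit]
  nlinarith [h1, h2]



/-- Coercivity of the second-fundamental-form quadratic form in
`Δ ln cosh θ`.  Let `λ_i ∈ (−1,1)` and let `h a i j` (for `a i j : Fin m`, representing
the components `h^{m+a}_{ij}`) be symmetric in `i,j`.  With
`‖B‖² = ∑_{a,i,j} (h^a_{ij})²` and `δ = 1 − max_i λ_i²` (so `∀ i, λ_i² ≤ 1 − δ` with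
equality for some `i`), one has `δ > 0` and
`‖B‖² − ∑_{k,i} λ_i²(h^{m+i}_{ik})² − 2∑_{k,i<j} λ_iλ_j h^{m+j}_{ik}h^{m+i}_{jk} ≥ δ‖B‖²`. -/
theorem stmt14 (m : ℕ) (lam : Fin m → ℝ) (hlam : ∀ i, lam i ∈ Set.Ioo (-1 : ℝ) 1)
    (h : Fin m → Fin m → Fin m → ℝ)
    (hsym : ∀ a i j, h a i j = h a j i)
    (δ : ℝ) (hub : ∀ i, lam i ^ 2 ≤ 1 - δ) (hmax : ∃ i, lam i ^ 2 = 1 - δ) :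
    0 < δ ∧
      δ * (∑ a, ∑ i, ∑ j, h a i j ^ 2) ≤
        (∑ a, ∑ i, ∑ j, h a i j ^ 2)
          - (∑ k, ∑ i, lam i ^ 2 * (h i i k) ^ 2)
          - 2 * ∑ k, ∑ i, ∑ j ∈ Finset.univ.filter (fun j => i < j),
              lam i * lam j * h j i k * h i j k := by
  obtain ⟨i0, hi0⟩ := hmax
  obtain ⟨hl, hr⟩ := hlam i0
  refine ⟨by nlinarith, ?_⟩
  have hB : (∑ a, ∑ i, ∑ j, h a i j ^ 2) = ∑ k, ∑ a, ∑ i, h a i k ^ 2 := by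
    rw [Finset.sum_congr rfl fun a (_ : a ∈ Finset.univ) =>
      (Finset.sum_comm (f := fun i j => h a i j ^ 2)), Finset.sum_comm]
  rw [hB]
  calc δ * ∑ k, ∑ a, ∑ i, h a i k ^ 2 = ∑ k, δ * (∑ a, ∑ i, h a i k ^ 2) := by
        rw [Finset.mul_sum]
    _ ≤ ∑ k, ((∑ a, ∑ i, h a i k ^ 2) - (∑ i, lam i ^ 2 * h i i k ^ 2)
          - 2 * ∑ i, ∑ j ∈ Finset.univ.filter (fun j => i < j),
              lam i * lam j * h j i k * h i j k) :=
        Finset.sum_le_sum fun k _ => key_ineq lam δ hub (fun a i => h a i k)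
    _ = (∑ k, ∑ a, ∑ i, h a i k ^ 2) - (∑ k, ∑ i, lam i ^ 2 * h i i k ^ 2)
          - 2 * ∑ k, ∑ i, ∑ j ∈ Finset.univ.filter (fun j => i < j),
              lam i * lam j * h j i k * h i j k := by
        rw [Finset.sum_sub_distrib, Finset.sum_sub_distrib, Finset.mul_sum]
end
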